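/- Let 𝔤 be a finite-dimensional nilpotent real Lie algebra and let Y ∈ 𝔤 be nonzero. Then there exists an inner product on 𝔤 for which Y is a geodesic. -/

import Mathlib

/-!
If `⁅Y, Z⁆ = Y` then `(ad Z + 1) Y = 0`, and `ad Z + 1` is invertible because `ad Z` is nilpotent;
so `Y` does not lie in `[𝔤, Y] = range (ad Y)`. Choose a linear form `f` with `f Y = 1` vanishing
on `[𝔤, Y]`, and an inner product with `⟨x, Y⟩ = f x` for all `x`
(`f x * f y + ⟨x - f x • Y, y - f y • Y⟩₀` for any inner product `⟨·, ·⟩₀`).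
-/

open Module

theorem Module.Basis.linearCombination_coord_repr_apply {R M ι : Type*} [CommSemiring R]
    [AddCommMonoid M] [Module R M] (b : Basis ι R M) (x y : M) {s : Finset ι}
    (hs : (b.repr x).support ⊆ s) :
    (Finsupp.linearCombination R b.coord ∘ₗ b.repr.toLinearMap) x y =
      ∑ i ∈ s, b.repr x i * b.repr y i := by
  simp [Finsupp.linearCombination_apply, Finsupp.sum_of_support_subset _ hs]

theorem Submodule.exists_dual_eq_one_of_notMem {K V : Type*} [Field K] [AddCommGroup V]
    [Module K V] {p : Submodule K V} {x : V} (hx : x ∉ p) :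
    ∃ f : Dual K V, f x = 1 ∧ ∀ y ∈ p, f y = 0 := by
  obtain ⟨f, hf⟩ := Projective.exists_dual_eq_one K (by simpa using hx : p.mkQ x ≠ 0)
  exact ⟨f ∘ₗ p.mkQ, hf, fun y hy => by simp [(Submodule.Quotient.mk_eq_zero p).2 hy]⟩

section InnerProductForm

variable {K V : Type*} [Field K] [LinearOrder K] [IsStrictOrderedRing K]
  [AddCommGroup V] [Module K V]

theorem exists_symm_posDef_bilin :
    ∃ B : V →ₗ[K] V →ₗ[K] K, (∀ x y, B x y = B y x) ∧ ∀ x, x ≠ 0 → 0 < B x x := by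
  classical
  let b := Basis.ofVectorSpace K V
  refine ⟨Finsupp.linearCombination K b.coord ∘ₗ b.repr.toLinearMap, fun x y => ?_, fun x hx => ?_⟩
  · rw [b.linearCombination_coord_repr_apply x y Finset.subset_union_left,
      b.linearCombination_coord_repr_apply y x Finset.subset_union_right, Finset.union_comm]
    simp only [mul_comm]
  · rw [b.linearCombination_coord_repr_apply x x subset_rfl]
    obtain ⟨i, hi⟩ : (b.repr x).support.Nonempty := by simpa using hx
    exact Finset.sum_pos' (fun j _ => mul_self_nonneg _) ⟨i, hi, mul_self_pos.2 (by simpa using hi)⟩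

theorem exists_symm_posDef_bilin_apply_right_eq {f : Dual K V} {Y : V} (hfY : f Y = 1) :
    ∃ B : V →ₗ[K] V →ₗ[K] K, (∀ x y, B x y = B y x) ∧ (∀ x, x ≠ 0 → 0 < B x x) ∧
      ∀ x, B x Y = f x := by
  obtain ⟨B₀, hB₀_symm, hB₀_pos⟩ := exists_symm_posDef_bilin (K := K) (V := V)
  have hB₀_nonneg (z : V) : 0 ≤ B₀ z z := by
    rcases eq_or_ne z 0 with rfl | hz
    · simp
    · exact (hB₀_pos z hz).le
  let P : V →ₗ[K] V := LinearMap.id - f.smulRight Y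
  have hP (x : V) : P x = x - f x • Y := rfl
  refine ⟨(LinearMap.mul K K).compl₁₂ f f + B₀.compl₁₂ P P, fun x y => ?_, fun x hx => ?_,
    fun x => ?_⟩
  · simp only [LinearMap.add_apply, LinearMap.compl₁₂_apply, LinearMap.mul_apply', mul_comm,
      hB₀_symm (P x)]
  · simp only [LinearMap.add_apply, LinearMap.compl₁₂_apply, LinearMap.mul_apply']
    rcases eq_or_ne (f x) 0 with hfx | hfx
    · have hPx : P x = x := by rw [hP, hfx, zero_smul, sub_zero]
      rw [hfx, hPx, mul_zero, zero_add]
      exact hB₀_pos x hx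
    · exact add_pos_of_pos_of_nonneg (mul_self_pos.2 hfx) (hB₀_nonneg _)
  · simp [hP, hfY]

end InnerProductForm

theorem LieAlgebra.notMem_range_ad_self {R L : Type*} [CommRing R] [LieRing L] [LieAlgebra R L]
    [LieRing.IsNilpotent L] {Y : L} (hY : Y ≠ 0) : Y ∉ LinearMap.range (ad R L Y) := by
  rintro ⟨Z, hZ⟩
  have hunit : IsUnit (ad R L Z + 1) := by
    obtain ⟨k, hk⟩ := nilpotent_ad_of_nilpotent_algebra R L
    exact IsNilpotent.isUnit_add_one ⟨k, hk Z⟩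
  refine hY (((End.isUnit_iff _).1 hunit).1 ?_)
  rw [ad_apply] at hZ
  rw [map_zero, LinearMap.add_apply, End.one_apply, ad_apply, ← lie_skew, hZ,
    neg_add_cancel]

theorem LieAlgebra.lie_mem_range_ad_right {R L : Type*} [CommRing R] [LieRing L] [LieAlgebra R L]
    (X Y : L) : ⁅X, Y⁆ ∈ LinearMap.range (ad R L Y) :=
  ⟨-X, by rw [ad_apply, lie_neg, lie_skew]⟩

theorem nilpotent_exists_innerProduct_geodesic_general
    (g : Type*) [LieRing g] [LieAlgebra ℝ g]
    [LieRing.IsNilpotent g]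
    (Y : g) (hY : Y ≠ 0) :
    ∃ B : g →ₗ[ℝ] g →ₗ[ℝ] ℝ,
      (∀ x y : g, B x y = B y x) ∧ (∀ x : g, x ≠ 0 → 0 < B x x) ∧
      (∀ X : g, B ⁅X, Y⁆ Y = 0) := by
  obtain ⟨f, hfY, hf⟩ := Submodule.exists_dual_eq_one_of_notMem
    (LieAlgebra.notMem_range_ad_self (R := ℝ) hY)
  obtain ⟨B, hB_symm, hB_pos, hBY⟩ := exists_symm_posDef_bilin_apply_right_eq hfY
  exact ⟨B, hB_symm, hB_pos, fun X => (hBY _).trans (hf _ (LieAlgebra.lie_mem_range_ad_right X Y))⟩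

/-- If `g` is a finite-dimensional nilpotent real Lie algebra and `Y ≠ 0`,
then there is an inner product on `g` for which `Y` is a geodesic. -/
theorem nilpotent_exists_innerProduct_geodesic
    (g : Type*) [LieRing g] [LieAlgebra ℝ g] [FiniteDimensional ℝ g]
    [LieRing.IsNilpotent g]
    (Y : g) (hY : Y ≠ 0) :
    ∃ B : g →ₗ[ℝ] g →ₗ[ℝ] ℝ,
      (∀ x y : g, B x y = B y x) ∧ (∀ x : g, x ≠ 0 → 0 < B x x) ∧
      (∀ X : g, B ⁅X, Y⁆ Y = 0) :=
  nilpotent_exists_innerProduct_geodesic_general g Y hY
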